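/- Let S be a nonempty semigroup such that S \ E(S) is finite, and let T be an S-valued sequence of length |S \ E(S)|. Then Π(T) ∩ E(S) = ∅ if and only if there exist distinct elements x_1, ..., x_k of S such that supp(T) = {x_1, ..., x_k}; each ⟨x_i⟩ is finite with I(x_i) ≡ 1 (mod P(x_i)) and v_{x_i}(T) = I(x_i) + P(x_i) − 2; x_i * x_j = x_j * x_i = x_j for all 1 ≤ i < j ≤ k; the sets of non-idempotent elements of the ⟨x_i⟩ are pairwise disjoint; and every element of S outside ⋃_{i=1}^k ⟨x_i⟩ is an idempotent. -/

import Mathlib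

/-- Product, in order, of the nonempty list `a :: l` in a semigroup. -/
def sprod {S : Type*} [Mul S] (a : S) (l : List S) : S := l.foldl (· * ·) a

/-- `pow1 x n = x^(n+1)`: the `(n+1)`-st power of `x` in a semigroup. -/
def pow1 {S : Type*} [Mul S] (x : S) : ℕ → S := fun n => Nat.rec x (fun _ y => y * x) n

/-- `Π(T)`: the set of products, in order, of nonempty lists which are
permutations of order-preserving sublists of `T`. -/
def PiSet {S : Type*} [Mul S] (T : List S) : Set S :=
  {s | ∃ u : List S, u.Sublist T ∧ ∃ a l, (a :: l).Perm u ∧ sprod a l = s}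

/-- `A(L)`: the set of products, in order, of nonempty order-preserving sublists of `L`. -/
def ASet {S : Type*} [Mul S] (L : List S) : Set S :=
  {s | ∃ a l, (a :: l).Sublist L ∧ sprod a l = s}

/-- `HasIndexPeriod x r p` says that `r` is the index of `x` (the least `r > 0` such
that `x^r = x^t` for some positive `t ≠ r`) and `p` is the period of `x` (the least
`p > 0` with `x^(r+p) = x^r`). Powers are expressed via `pow1 x (n-1) = x^n`. -/
def HasIndexPeriod {S : Type*} [Mul S] (x : S) (r p : ℕ) : Prop :=
  (0 < r ∧ (∃ t, 0 < t ∧ t ≠ r ∧ pow1 x (t - 1) = pow1 x (r - 1)) ∧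
    ∀ r', 0 < r' → (∃ t, 0 < t ∧ t ≠ r' ∧ pow1 x (t - 1) = pow1 x (r' - 1)) → r ≤ r') ∧
  (0 < p ∧ pow1 x (r + p - 1) = pow1 x (r - 1) ∧
    ∀ p', 0 < p' → pow1 x (r + p' - 1) = pow1 x (r - 1) → p ≤ p')

/-! Let `N` be the (finite) set of non-idempotents. Every cyclic subsemigroup `⟨x⟩` is then
finite, with index `r` and period `p`; it contains exactly one idempotent, hence `r + p - 2`
non-idempotents, and `x ^ n` is idempotent for the multiple `n` of `p` in `[r, r + p - 1]`, so a
sequence free of idempotent products contains `x` at most `r + p - 2` times.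

Suppose `T` is free of idempotent products and `u ≠ w` are terms of `T`. Listing `T` as
`w, u, …`, each new term strictly enlarges the set of ordered products of the prefix (otherwise
that set would contain all powers of the new term, among them an idempotent), and all these
products lie in `N`, which has only `|T|` elements; so `w, u, w * u` cannot be distinct. Hence the
terms form a chain `x₁, …, x_k` with `x_i * x_j = x_j * x_i = x_j` for `i < j`, the
non-idempotent parts of the `⟨x_i⟩` are disjoint subsets of `N` of sizes
`I(x_i) + P(x_i) - 2 ≥ v_{x_i}(T)`, and as the multiplicities add up to `|N|`, all these bounds
are sharp. Conversely, for such a `T` any product of a rearranged subsequence equals `x_i ^ c`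
with `x_i` its letter of largest index and `1 ≤ c ≤ I(x_i) + P(x_i) - 2`, which is not
idempotent when `I(x_i) ≡ 1 (mod P(x_i))`. -/

section Powers
variable {S : Type*} [Semigroup S]

theorem pow1_succ (x : S) (n : ℕ) : pow1 x (n + 1) = pow1 x n * x := rfl

theorem pow1_add (x : S) (m n : ℕ) : pow1 x (m + n + 1) = pow1 x m * pow1 x n := by
  induction n with
  | zero => rfl
  | succ n ih => rw [← add_assoc, pow1_succ, ih, pow1_succ, mul_assoc]

theorem pow1_succ' (x : S) (n : ℕ) : pow1 x (n + 1) = x * pow1 x n := by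
  have h := pow1_add x 0 n
  rwa [Nat.zero_add] at h

theorem mul_pow1_of_mul_eq {u w : S} (h : u * w = w) (m : ℕ) : u * pow1 w m = pow1 w m := by
  induction m with
  | zero => exact h
  | succ m ih => rw [pow1_succ, ← mul_assoc, ih]

theorem pow1_mul_of_mul_eq {u w : S} (h : u * w = w) (m : ℕ) : pow1 u m * w = w := by
  induction m with
  | zero => exact h
  | succ m ih => rw [pow1_succ, mul_assoc, h, ih]

theorem pow1_add_mul_of_pow1_add_eq {x : S} {a d : ℕ} (h : pow1 x (a + d) = pow1 x a)
    {c : ℕ} (hc : a ≤ c) (j : ℕ) : pow1 x (c + j * d) = pow1 x c := by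
  have hshift : ∀ n, a ≤ n → pow1 x (n + d) = pow1 x n := by
    intro n hn
    obtain ⟨e, rfl⟩ := Nat.exists_eq_add_of_le hn
    cases e with
    | zero => simpa using h
    | succ e => rw [show a + (e + 1) + d = a + d + e + 1 by omega, pow1_add, h, ← pow1_add]; rfl
  induction j with
  | zero => simp
  | succ j ih =>
    rw [show c + (j + 1) * d = c + j * d + d by ring, hshift _ (by omega), ih]

end Powers

section Products
variable {S : Type*} [Semigroup S]

theorem sprod_cons (a b : S) (l : List S) : sprod a (b :: l) = a * sprod b l := by
  induction l generalizing b with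
  | nil => rfl
  | cons c l ih => exact (congrArg (List.foldl (· * ·) · l) (mul_assoc a b c)).trans (ih (b * c))

theorem sprod_append_singleton (a : S) (l : List S) (t : S) :
    sprod a (l ++ [t]) = sprod a l * t := by
  simp [sprod, List.foldl_append]

theorem sprod_replicate (x : S) (m : ℕ) : sprod x (List.replicate m x) = pow1 x m := by
  induction m with
  | zero => rfl
  | succ m ih => rw [List.replicate_succ', sprod_append_singleton, ih, pow1_succ]

theorem mul_sprod_of_forall_mul_eq {z a : S} {l : List S} (h : ∀ y ∈ a :: l, z * y = z) :
    z * sprod a l = z := by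
  rw [← sprod_cons]
  induction l generalizing a with
  | nil => exact h a (by simp)
  | cons b l ih =>
    rw [sprod, List.foldl_cons, List.foldl_cons, h a (by simp)]
    exact ih (fun y hy => h y (by simp_all))

end Products

theorem Nat.exists_dvd_between {p : ℕ} (hp : 0 < p) (r : ℕ) :
    ∃ n, r ≤ n ∧ n ≤ r + p - 1 ∧ p ∣ n := by
  refine ⟨(r + p - 1) / p * p, ?_, Nat.div_mul_le_self _ _, Nat.dvd_mul_left _ _⟩
  have := Nat.lt_div_mul_add (a := r + p - 1) hp
  omega

theorem Nat.modEq_one_iff_forall_not_dvd {r p : ℕ} (hr : 0 < r) (hp : 0 < p) :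
    r ≡ 1 [MOD p] ↔ ∀ n, r ≤ n → n ≤ r + p - 2 → ¬ p ∣ n := by
  rw [Nat.ModEq.comm, Nat.modEq_iff_dvd' hr]
  constructor
  · intro hdvd n hrn hn hpn
    have := Nat.le_of_dvd (by omega) (Nat.dvd_sub hpn hdvd)
    omega
  · intro h
    obtain ⟨n, hrn, hn, hpn⟩ := Nat.exists_dvd_between hp r
    have hn' : n = r - 1 + p := by
      by_contra hne
      exact h n hrn (by omega) hpn
    simpa [hn'] using Nat.dvd_sub hpn (dvd_refl p)

namespace HasIndexPeriod
variable {S : Type*} [Semigroup S] {x : S} {r p : ℕ}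

theorem index_pos (h : HasIndexPeriod x r p) : 0 < r := h.1.1

theorem period_pos (h : HasIndexPeriod x r p) : 0 < p := h.2.1

theorem pow1_add_mul_period (h : HasIndexPeriod x r p) {c : ℕ} (hc : r - 1 ≤ c) (j : ℕ) :
    pow1 x (c + j * p) = pow1 x c := by
  refine pow1_add_mul_of_pow1_add_eq ?_ hc j
  rw [← h.2.2.1]
  congr 1
  have := h.index_pos
  omega

theorem index_le_and_dvd_of_pow1_eq (h : HasIndexPeriod x r p) {a b : ℕ} (hab : a < b)
    (heq : pow1 x a = pow1 x b) : r - 1 ≤ a ∧ p ∣ b - a := by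
  have hr : r ≤ a + 1 :=
    h.1.2.2 (a + 1) (by omega) ⟨b + 1, by omega, by omega, by simpa using heq.symm⟩
  refine ⟨by omega, Nat.dvd_of_mod_eq_zero (by_contra fun hs => ?_)⟩
  have := h.index_pos
  set d := b - a
  have hd : pow1 x (a + d) = pow1 x a := by rw [show a + d = b by omega, heq]
  -- `x ^ r` is fixed by a shift of `d % p`, contradicting the minimality of `p`.
  have hfix : pow1 x (r + d % p - 1) = pow1 x (r - 1) := calc
    pow1 x (r + d % p - 1) = pow1 x (r - 1 + d % p + (a + d / p) * p) := by
      rw [h.pow1_add_mul_period (by omega)]; congr 1; omega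
    _ = pow1 x (r - 1 + a * p + 1 * d) := by
      congr 1; nth_rw 3 [← Nat.mod_add_div d p]; ring
    _ = pow1 x (r - 1 + a * p) :=
      pow1_add_mul_of_pow1_add_eq hd (le_add_left (Nat.le_mul_of_pos_right a h.period_pos)) 1
    _ = pow1 x (r - 1) := h.pow1_add_mul_period le_rfl a
  have := h.2.2.2 (d % p) (Nat.pos_of_ne_zero hs) hfix
  have := Nat.mod_lt d h.period_pos
  omega

theorem pow1_eq_pow1_iff (h : HasIndexPeriod x r p) {a b : ℕ} (hab : a ≤ b) :
    pow1 x a = pow1 x b ↔ a = b ∨ (r - 1 ≤ a ∧ p ∣ b - a) := by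
  refine ⟨fun heq => ?_, ?_⟩
  · rcases hab.lt_or_eq with hlt | rfl
    · exact Or.inr (h.index_le_and_dvd_of_pow1_eq hlt heq)
    · exact Or.inl rfl
  · rintro (rfl | ⟨hr, j, hj⟩)
    · rfl
    · rw [show b = a + j * p by rw [mul_comm, ← hj]; omega, h.pow1_add_mul_period hr]

theorem pow1_mul_self_eq_iff (h : HasIndexPeriod x r p) (m : ℕ) :
    pow1 x m * pow1 x m = pow1 x m ↔ r ≤ m + 1 ∧ p ∣ m + 1 := by
  rw [← pow1_add, eq_comm, h.pow1_eq_pow1_iff (by omega), show m + m + 1 - m = m + 1 by omega]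
  omega

theorem injOn_pow1 (h : HasIndexPeriod x r p) : Set.InjOn (pow1 x) (Set.Iio (r + p - 1)) := by
  suffices ∀ a b, a < b → b < r + p - 1 → pow1 x a ≠ pow1 x b by
    intro a ha b hb heq
    by_contra hne
    rcases lt_or_gt_of_ne hne with hlt | hlt
    exacts [this a b hlt hb heq, this b a hlt ha heq.symm]
  intro a b hab hb heq
  obtain ⟨hr, hdvd⟩ := h.index_le_and_dvd_of_pow1_eq hab heq
  have := Nat.le_of_dvd (by omega) hdvd
  omega

theorem range_pow1_eq_image (h : HasIndexPeriod x r p) :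
    Set.range (pow1 x) = pow1 x '' Set.Iio (r + p - 1) := by
  refine (Set.image_subset_range _ _).antisymm' ?_
  rintro _ ⟨m, rfl⟩
  have hr := h.index_pos
  have hp := h.period_pos
  by_cases hm : m < r + p - 1
  · exact ⟨m, hm, rfl⟩
  · have hmod := Nat.mod_lt (m - (r - 1)) hp
    refine ⟨r - 1 + (m - (r - 1)) % p, by simp only [Set.mem_Iio]; omega, ?_⟩
    refine (h.pow1_eq_pow1_iff (by omega)).2 (Or.inr ⟨le_add_right le_rfl, ?_⟩)
    rw [show m - (r - 1 + (m - (r - 1)) % p) = m - (r - 1) - (m - (r - 1)) % p by omega]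
    exact Nat.dvd_sub_mod _

theorem finite_range_pow1 (h : HasIndexPeriod x r p) : (Set.range (pow1 x)).Finite := by
  rw [h.range_pow1_eq_image]
  exact (Set.finite_Iio _).image _

theorem ncard_range_pow1 (h : HasIndexPeriod x r p) :
    (Set.range (pow1 x)).ncard = r + p - 1 := by
  rw [h.range_pow1_eq_image, h.injOn_pow1.ncard_image, Set.ncard_eq_toFinset_card',
    Set.toFinset_Iio, Nat.card_Iio]

theorem exists_pow1_mul_self_eq (h : HasIndexPeriod x r p) :
    ∃ m, pow1 x m * pow1 x m = pow1 x m := by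
  obtain ⟨n, hrn, -, hpn⟩ := Nat.exists_dvd_between h.period_pos r
  have := h.index_pos
  refine ⟨n - 1, (h.pow1_mul_self_eq_iff _).2 ?_⟩
  rw [Nat.sub_add_cancel (by omega)]
  exact ⟨hrn, hpn⟩

theorem pow1_eq_of_mul_self_eq (h : HasIndexPeriod x r p) {a b : ℕ}
    (ha : pow1 x a * pow1 x a = pow1 x a) (hb : pow1 x b * pow1 x b = pow1 x b) :
    pow1 x a = pow1 x b := by
  wlog hab : a ≤ b generalizing a b
  · exact (this hb ha (by omega)).symm
  obtain ⟨hra, hpa⟩ := (h.pow1_mul_self_eq_iff a).1 ha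
  obtain ⟨-, hpb⟩ := (h.pow1_mul_self_eq_iff b).1 hb
  refine (h.pow1_eq_pow1_iff hab).2 (Or.inr ⟨by omega, ?_⟩)
  simpa using Nat.dvd_sub hpb hpa

theorem ncard_nonidempotent_pow1 (h : HasIndexPeriod x r p) :
    {y ∈ Set.range (pow1 x) | y * y ≠ y}.ncard = r + p - 2 := by
  obtain ⟨m, hm⟩ := h.exists_pow1_mul_self_eq
  have hsdiff : {y ∈ Set.range (pow1 x) | y * y ≠ y} = Set.range (pow1 x) \ {pow1 x m} := by
    ext y
    simp only [Set.mem_sep_iff, Set.mem_sdiff, Set.mem_singleton_iff, and_congr_right_iff]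
    rintro ⟨a, rfl⟩
    exact ⟨fun hne he => hne (he ▸ hm),
      fun hne hidem => hne (h.pow1_eq_of_mul_self_eq hidem hm)⟩
  rw [hsdiff, Set.ncard_sdiff_singleton_of_mem (Set.mem_range_self m), h.ncard_range_pow1]
  omega

theorem pow1_mul_self_ne (h : HasIndexPeriod x r p) (hmod : r ≡ 1 [MOD p]) {m : ℕ}
    (hm : m + 1 ≤ r + p - 2) : pow1 x m * pow1 x m ≠ pow1 x m := by
  rw [Ne, h.pow1_mul_self_eq_iff]
  exact fun ⟨hr, hp⟩ =>
    (Nat.modEq_one_iff_forall_not_dvd h.index_pos h.period_pos).1 hmod _ hr hm hp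

end HasIndexPeriod

section Existence
variable {S : Type*} [Semigroup S]

theorem exists_hasIndexPeriod_of_pow1_eq {x : S} {a b : ℕ} (hab : a < b)
    (heq : pow1 x a = pow1 x b) : ∃ r p, HasIndexPeriod x r p := by
  classical
  let IsRepeated : ℕ → Prop := fun r' =>
    0 < r' ∧ ∃ t, 0 < t ∧ t ≠ r' ∧ pow1 x (t - 1) = pow1 x (r' - 1)
  have hrep : ∃ r', IsRepeated r' :=
    ⟨a + 1, by omega, b + 1, by omega, by omega, by simpa using heq.symm⟩
  obtain ⟨hr0, t, ht0, htr, hteq⟩ := Nat.find_spec hrep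
  set r := Nat.find hrep
  have hrt : r < t := by
    by_contra! htr'
    have := Nat.find_min' hrep (show IsRepeated t from ⟨ht0, r, hr0, htr.symm, hteq.symm⟩)
    omega
  let IsPeriod : ℕ → Prop := fun p' => 0 < p' ∧ pow1 x (r + p' - 1) = pow1 x (r - 1)
  have hper : ∃ p', IsPeriod p' := ⟨t - r, by omega, by rw [← hteq]; congr 1; omega⟩
  obtain ⟨hp0, hpeq⟩ := Nat.find_spec hper
  exact ⟨r, Nat.find hper,
    ⟨hr0, ⟨t, ht0, htr, hteq⟩, fun r' h1 h2 => Nat.find_min' hrep ⟨h1, h2⟩⟩,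
    hp0, hpeq, fun p' h1 h2 => Nat.find_min' hper ⟨h1, h2⟩⟩

theorem exists_hasIndexPeriod (hfin : {x : S | x * x ≠ x}.Finite) (x : S) :
    ∃ r p, HasIndexPeriod x r p := by
  by_cases hinj : Function.Injective (pow1 x)
  · refine absurd (hfin.subset ?_) (Set.infinite_range_of_injective hinj)
    rintro _ ⟨m, rfl⟩ hm
    have := hinj ((pow1_add x m m).trans hm)
    omega
  · obtain ⟨a, b, heq, hne⟩ := Function.not_injective_iff.1 hinj
    rcases lt_or_gt_of_ne hne with hlt | hlt
    exacts [exists_hasIndexPeriod_of_pow1_eq hlt heq,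
      exists_hasIndexPeriod_of_pow1_eq hlt heq.symm]

end Existence

section ProductSets
variable {S : Type*} [Semigroup S]

theorem piSet_eq_of_perm {T T' : List S} (h : T.Perm T') : PiSet T = PiSet T' := by
  have key : ∀ {T T' : List S}, T.Perm T' → PiSet T ⊆ PiSet T' := by
    rintro T T' h s ⟨u, hu, a, l, hperm, rfl⟩
    obtain ⟨u', hpu, hsu⟩ := hu.subperm.trans h.subperm
    exact ⟨u', hsu, a, l, hperm.trans hpu.symm, rfl⟩
  exact (key h).antisymm (key h.symm)

theorem aSet_subset_piSet (L : List S) : ASet L ⊆ PiSet L := by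
  rintro s ⟨a, l, hsub, hprod⟩
  exact ⟨a :: l, hsub, a, l, List.Perm.refl _, hprod⟩

theorem aSet_mono {L L' : List S} (h : L.Sublist L') : ASet L ⊆ ASet L' := by
  rintro s ⟨a, l, hsub, hprod⟩
  exact ⟨a, l, hsub.trans h, hprod⟩

theorem mem_piSet_of_mem {T : List S} {u : S} (hu : u ∈ T) : u ∈ PiSet T :=
  ⟨[u], List.singleton_sublist.2 hu, u, [], List.Perm.refl _, rfl⟩

theorem pow1_mem_piSet [DecidableEq S] {T : List S} {u : S} {m : ℕ} (hm : m < T.count u) :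
    pow1 u m ∈ PiSet T :=
  ⟨List.replicate (m + 1) u, List.replicate_sublist_iff.2 hm, u, List.replicate m u,
    by rw [List.replicate_succ], sprod_replicate u m⟩

theorem aSet_ssubset_append_singleton {L : List S} {t : S}
    (ht : ∃ m, pow1 t m * pow1 t m = pow1 t m) (hfree : ∀ s ∈ ASet (L ++ [t]), s * s ≠ s) :
    ASet L ⊂ ASet (L ++ [t]) := by
  refine Set.ssubset_iff_subset_ne.2 ⟨aSet_mono (List.sublist_append_left _ _), fun heq => ?_⟩
  -- If appending `t` creates no new product, the products are closed under `· * t`.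
  have hpow : ∀ m, pow1 t m ∈ ASet (L ++ [t]) := by
    intro m
    induction m with
    | zero => exact ⟨t, [], List.singleton_sublist.2 (by simp), rfl⟩
    | succ m ih =>
      obtain ⟨a, l, hsub, hprod⟩ := heq ▸ ih
      exact ⟨a, l ++ [t], hsub.append (List.Sublist.refl _),
        by rw [sprod_append_singleton, hprod, pow1_succ]⟩
  obtain ⟨m, hm⟩ := ht
  exact hfree _ (hpow m) hm

theorem ncard_aSet_add_length_le {L M : List S}
    (hidem : ∀ t ∈ M, ∃ m, pow1 t m * pow1 t m = pow1 t m)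
    (hfin : (ASet (L ++ M)).Finite) (hfree : ∀ s ∈ ASet (L ++ M), s * s ≠ s) :
    (ASet L).ncard + M.length ≤ (ASet (L ++ M)).ncard := by
  induction M using List.reverseRecOn with
  | nil => simp
  | append_singleton M t ih =>
    rw [← List.append_assoc] at hfin hfree ⊢
    have hsub := aSet_mono (List.sublist_append_left (L ++ M) [t])
    have := ih (fun t' ht' => hidem t' (by simp [ht'])) (hfin.subset hsub)
      (fun s hs => hfree s (hsub hs))
    have := Set.ncard_lt_ncard (aSet_ssubset_append_singleton (hidem t (by simp)) hfree) hfin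
    simp only [List.length_append, List.length_singleton]
    omega

end ProductSets

theorem List.exists_perm_pairwise {α : Type*} {R : α → α → Prop} {l : List α} (hl : l.Nodup)
    (htotal : ∀ a ∈ l, ∀ b ∈ l, a ≠ b → R a b ∨ R b a)
    (htrans : ∀ a ∈ l, ∀ b ∈ l, ∀ c ∈ l, R a b → R b c → R a c) :
    ∃ l' : List α, l'.Perm l ∧ l'.Pairwise R := by
  classical
  -- Sort the members of `l` by the reflexive closure of `R`, which is total on them.
  let R' : {a // a ∈ l} → {a // a ∈ l} → Prop := fun a b => a = b ∨ R a b
  have : Std.Total R' := ⟨fun a b => by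
    by_cases hab : a = b
    · exact Or.inl (Or.inl hab)
    · exact (htotal a a.2 b b.2 (Subtype.coe_ne_coe.2 hab)).imp Or.inr Or.inr⟩
  have : IsTrans _ R' := ⟨fun a b c => by
    rintro (rfl | hab) (rfl | hbc)
    exacts [Or.inl rfl, Or.inr hbc, Or.inr hab, Or.inr (htrans a a.2 b b.2 c c.2 hab hbc)]⟩
  have hperm := (List.perm_insertionSort R' l.attach).map Subtype.val
  rw [List.attach_map_subtype_val] at hperm
  refine ⟨_, hperm, List.pairwise_map.2 ?_⟩
  refine ((List.pairwise_insertionSort R' _).and ((hperm.nodup_iff.2 hl).of_map _)).imp ?_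
  rintro a b ⟨rfl | h, hne⟩
  exacts [absurd rfl hne, h]

section FreeSequences
variable {S : Type*} [Semigroup S]

theorem mul_eq_right_trans {a b c : S} (hab : a * b = b ∧ b * a = b)
    (hbc : b * c = c ∧ c * b = c) : a * c = c ∧ c * a = c :=
  ⟨by rw [← hbc.1, ← mul_assoc, hab.1], by rw [← hbc.2, mul_assoc, hab.2]⟩

theorem disjoint_nonidempotent_pow1_of_mul_eq {u w : S} (h : u * w = w) :
    Disjoint {y ∈ Set.range (pow1 u) | y * y ≠ y} {y ∈ Set.range (pow1 w) | y * y ≠ y} := by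
  rw [Set.disjoint_left]
  rintro _ ⟨⟨m, rfl⟩, hne⟩ ⟨⟨j, hj⟩, -⟩
  exact hne (pow1_mul_of_mul_eq (hj ▸ mul_pow1_of_mul_eq h j) m)

variable {T : List S}

theorem mul_eq_left_or_right_of_free (hfin : {x : S | x * x ≠ x}.Finite)
    (hfree : ∀ s ∈ PiSet T, s * s ≠ s) (hlen : T.length = {x : S | x * x ≠ x}.ncard)
    {u w : S} (hne : u ≠ w) (hu : u ∈ T) (hw : w ∈ T) : w * u = w ∨ w * u = u := by
  classical
  obtain ⟨R, hperm⟩ : ∃ R, ([w, u] ++ R).Perm T :=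
    ⟨(T.erase w).erase u, ((List.perm_cons_erase hw).trans
      ((List.perm_cons_erase ((List.mem_erase_of_ne hne).2 hu)).cons w)).symm⟩
  have hA : ASet ([w, u] ++ R) ⊆ {x : S | x * x ≠ x} := fun s hs =>
    hfree s (piSet_eq_of_perm hperm ▸ aSet_subset_piSet _ hs)
  have hA2 : ASet [w, u] ⊆ {x : S | x * x ≠ x} :=
    (aSet_mono (List.sublist_append_left _ _)).trans hA
  -- Each term appended to a prefix of `w :: u :: R` enlarges the set of its products, and there
  -- are only `|T|` non-idempotents available, so `[w, u]` has at most two distinct products.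
  have hgrow := ncard_aSet_add_length_le
    (fun t _ => (exists_hasIndexPeriod hfin t).elim fun _ ⟨_, h⟩ => h.exists_pow1_mul_self_eq)
    (hfin.subset hA) hA
  have htop := Set.ncard_le_ncard hA hfin
  have hlenR : T.length = R.length + 2 := by
    simp only [← hperm.length_eq, List.length_append, List.length_cons, List.length_nil]
    omega
  by_contra! hwu
  have hsub : ({w, u, w * u} : Set S) ⊆ ASet [w, u] := by
    rintro s (rfl | rfl | rfl)
    exacts [⟨s, [], by simp, rfl⟩, ⟨s, [], by simp, rfl⟩,
      ⟨w, [u], List.Sublist.refl _, rfl⟩]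
  have h3 : ({w, u, w * u} : Set S).ncard = 3 :=
    Set.ncard_eq_three.2 ⟨w, u, w * u, hne.symm, hwu.1.symm, hwu.2.symm, rfl⟩
  have := Set.ncard_le_ncard hsub (hfin.subset hA2)
  omega

theorem mul_eq_right_or_left_of_free (hfin : {x : S | x * x ≠ x}.Finite)
    (hfree : ∀ s ∈ PiSet T, s * s ≠ s) (hlen : T.length = {x : S | x * x ≠ x}.ncard)
    {u w : S} (hne : u ≠ w) (hu : u ∈ T) (hw : w ∈ T) :
    (u * w = w ∧ w * u = w) ∨ (w * u = u ∧ u * w = u) := by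
  have hu' := hfree u (mem_piSet_of_mem hu)
  have hw' := hfree w (mem_piSet_of_mem hw)
  rcases mul_eq_left_or_right_of_free hfin hfree hlen hne.symm hw hu with huw | huw <;>
    rcases mul_eq_left_or_right_of_free hfin hfree hlen hne hu hw with hwu | hwu
  · exact (hw' (calc w * w = w * u * w := by rw [hwu]
      _ = w := by rw [mul_assoc, huw, hwu])).elim
  · exact Or.inr ⟨hwu, huw⟩
  · exact Or.inl ⟨huw, hwu⟩
  · exact (hu' (calc u * u = u * (w * u) := by rw [hwu]
      _ = u := by rw [← mul_assoc, huw, hwu])).elim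

theorem exists_chain_of_free (hfin : {x : S | x * x ≠ x}.Finite)
    (hfree : ∀ s ∈ PiSet T, s * s ≠ s) (hlen : T.length = {x : S | x * x ≠ x}.ncard) :
    ∃ l : List S, l.Nodup ∧ (∀ s, s ∈ l ↔ s ∈ T) ∧
      l.Pairwise (fun a b => a * b = b ∧ b * a = b) := by
  classical
  obtain ⟨l, hperm, hchain⟩ := List.exists_perm_pairwise (List.nodup_dedup T)
    (fun u hu w hw hne => mul_eq_right_or_left_of_free hfin hfree hlen hne
      (List.mem_dedup.1 hu) (List.mem_dedup.1 hw))
    (fun _ _ _ _ _ _ => mul_eq_right_trans)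
  exact ⟨l, hperm.nodup_iff.2 (List.nodup_dedup T), fun s => hperm.mem_iff.trans List.mem_dedup,
    hchain⟩

end FreeSequences

theorem eq_ncard_and_biUnion_eq_of_ncard_le_sum {ι α : Type*} {s : Finset ι} {A : ι → Set α}
    {N : Set α} (hN : N.Finite) (hsub : ∀ i ∈ s, A i ⊆ N)
    (hdisj : (s : Set ι).PairwiseDisjoint A) {c : ι → ℕ}
    (hc : ∀ i ∈ s, c i ≤ (A i).ncard)
    (hsum : N.ncard ≤ ∑ i ∈ s, c i) :
    (∀ i ∈ s, c i = (A i).ncard) ∧ ⋃ i ∈ s, A i = N := by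
  have hU : ⋃ i ∈ s, A i ⊆ N := Set.iUnion₂_subset hsub
  have hcardU : (⋃ i ∈ s, A i).ncard = ∑ i ∈ s, (A i).ncard := by
    rw [← finsum_mem_coe_finset, ← s.finite_toSet.ncard_biUnion
      (fun i hi => hN.subset (hsub i hi)) hdisj]
    simp
  have hle := Set.ncard_le_ncard hU hN
  have hsumle := Finset.sum_le_sum hc
  exact ⟨(Finset.sum_eq_sum_iff_of_le hc).1 (by omega),
    Set.eq_of_subset_of_ncard_le hU (by omega) hN⟩

section Counting
variable {S : Type*} [Semigroup S] [DecidableEq S] {T : List S}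

theorem not_dvd_of_le_count (hfree : ∀ s ∈ PiSet T, s * s ≠ s) {u : S} {r p : ℕ}
    (h : HasIndexPeriod u r p) {n : ℕ} (hrn : r ≤ n) (hn : n ≤ T.count u) : ¬ p ∣ n := by
  have := h.index_pos
  refine fun hpn => hfree _ (pow1_mem_piSet (u := u) (m := n - 1) (by omega)) ?_
  exact (h.pow1_mul_self_eq_iff _).2 (by rw [Nat.sub_add_cancel (by omega)]; exact ⟨hrn, hpn⟩)

theorem count_le_of_free (hfree : ∀ s ∈ PiSet T, s * s ≠ s) {u : S} {r p : ℕ}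
    (h : HasIndexPeriod u r p) : T.count u ≤ r + p - 2 := by
  obtain ⟨n, hrn, hn, hpn⟩ := Nat.exists_dvd_between h.period_pos r
  by_contra! hc
  exact not_dvd_of_le_count hfree h hrn (by omega) hpn

theorem modEq_one_of_count_eq (hfree : ∀ s ∈ PiSet T, s * s ≠ s) {u : S} {r p : ℕ}
    (h : HasIndexPeriod u r p) (hc : T.count u = r + p - 2) : r ≡ 1 [MOD p] :=
  (Nat.modEq_one_iff_forall_not_dvd h.index_pos h.period_pos).2 fun _ hrn hn =>
    not_dvd_of_le_count hfree h hrn (hc ▸ hn)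

theorem count_eq_and_cover_of_free (hfin : {x : S | x * x ≠ x}.Finite)
    (hfree : ∀ s ∈ PiSet T, s * s ≠ s) (hlen : T.length = {x : S | x * x ≠ x}.ncard) :
    (∀ u ∈ T, ∃ r p, HasIndexPeriod u r p ∧ T.count u = r + p - 2) ∧
      ∀ s : S, s * s ≠ s → ∃ u ∈ T, s ∈ Set.range (pow1 u) := by
  choose rI pI hip using exists_hasIndexPeriod hfin
  -- The non-idempotent powers of the distinct terms of `T` are disjoint sets of
  -- non-idempotents, each at least as large as the multiplicity of its term, and these
  -- multiplicities add up to the number of all non-idempotents.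
  obtain ⟨hcount, hcover⟩ := eq_ncard_and_biUnion_eq_of_ncard_le_sum (s := T.toFinset)
    (A := fun u => {y ∈ Set.range (pow1 u) | y * y ≠ y}) (c := T.count) hfin
    (fun _ _ _ hy => hy.2)
    (fun u hu w hw hne => by
      rcases mul_eq_right_or_left_of_free hfin hfree hlen hne (List.mem_toFinset.1 hu)
        (List.mem_toFinset.1 hw) with h | h
      exacts [disjoint_nonidempotent_pow1_of_mul_eq h.1,
        (disjoint_nonidempotent_pow1_of_mul_eq h.1).symm])
    (fun u _ => (count_le_of_free hfree (hip u)).trans (hip u).ncard_nonidempotent_pow1.ge)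
    (by rw [← hlen, List.sum_toFinset_count_eq_length])
  refine ⟨fun u hu => ⟨rI u, pI u, hip u, (hcount u (List.mem_toFinset.2 hu)).trans
    (hip u).ncard_nonidempotent_pow1⟩, fun s hs => ?_⟩
  replace hs : s ∈ {x : S | x * x ≠ x} := hs
  rw [← hcover] at hs
  obtain ⟨u, hu, hsu, -⟩ := Set.mem_iUnion₂.1 hs
  exact ⟨u, List.mem_toFinset.1 hu, hsu⟩

theorem sprod_eq_pow1_count {z a : S} {l : List S} (hz : z ∈ a :: l)
    (habs : ∀ y ∈ a :: l, y ≠ z → y * z = z ∧ z * y = z) :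
    sprod a l = pow1 z ((a :: l).count z - 1) := by
  induction l generalizing a with
  | nil =>
    obtain rfl : z = a := by simpa using hz
    simp; rfl
  | cons b l ih =>
    rw [sprod_cons]
    by_cases hzl : z ∈ b :: l
    · have hpos := List.count_pos_iff.2 hzl
      rw [ih hzl fun y hy => habs y (List.mem_cons_of_mem a hy)]
      by_cases ha : a = z
      · subst ha
        rw [← pow1_succ', List.count_cons_self]
        congr 1
        omega
      · rw [List.count_cons_of_ne ha, mul_pow1_of_mul_eq (habs a (by simp) ha).1]
    · obtain rfl : z = a := by simpa [hzl] using hz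
      rw [List.count_cons_self, List.count_eq_zero.2 hzl]
      exact mul_sprod_of_forall_mul_eq fun y hy =>
        (habs y (List.mem_cons_of_mem _ hy) fun h => hzl (h ▸ hy)).2

theorem mul_self_ne_of_mem_piSet {k : ℕ} {x : Fin k → S} (hsupp : ∀ s ∈ T, ∃ i, s = x i)
    (hchain : ∀ i j, i < j → x i * x j = x j ∧ x j * x i = x j)
    (hidx : ∀ i, ∃ r p, HasIndexPeriod (x i) r p ∧ r ≡ 1 [MOD p] ∧
      T.count (x i) = r + p - 2) :
    ∀ s ∈ PiSet T, s * s ≠ s := by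
  rintro _ ⟨v, hv, a, l, hperm, rfl⟩
  have hsupp' : ∀ y ∈ a :: l, ∃ i, y = x i :=
    fun y hy => hsupp y (hv.subset (hperm.subset hy))
  -- The letter of largest index absorbs all the others.
  let I := Finset.univ.filter (fun i => x i ∈ a :: l)
  have hI : I.Nonempty := let ⟨i, hi⟩ := hsupp' a (by simp); ⟨i, by simp [I, ← hi]⟩
  have hz : x (I.max' hI) ∈ a :: l := (Finset.mem_filter.1 (I.max'_mem hI)).2
  have habs : ∀ y ∈ a :: l, y ≠ x (I.max' hI) →
      y * x (I.max' hI) = x (I.max' hI) ∧ x (I.max' hI) * y = x (I.max' hI) := by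
    intro y hy hne
    obtain ⟨j, rfl⟩ := hsupp' y hy
    have hj : j ≤ I.max' hI := I.le_max' j (Finset.mem_filter.2 ⟨Finset.mem_univ _, hy⟩)
    exact hchain j _ (lt_of_le_of_ne hj fun h => hne (h ▸ rfl))
  obtain ⟨r, p, h, hmod, hcount⟩ := hidx (I.max' hI)
  have hpos := List.count_pos_iff.2 hz
  have hle : (a :: l).count (x (I.max' hI)) ≤ T.count (x (I.max' hI)) :=
    hperm.count_eq _ ▸ hv.count_le _
  rw [sprod_eq_pow1_count hz habs]
  exact h.pow1_mul_self_ne hmod (by omega)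

end Counting

theorem stmt_14_general {S : Type*} [Semigroup S] [DecidableEq S]
    (hfin : {x : S | x * x ≠ x}.Finite)
    (T : List S) (hlen : T.length = {x : S | x * x ≠ x}.ncard) :
    PiSet T ∩ {e : S | e * e = e} = ∅ ↔
      ∃ (k : ℕ) (x : Fin k → S), Function.Injective x ∧
        (∀ s : S, s ∈ T ↔ ∃ i, s = x i) ∧
        (∀ i, (Set.range (pow1 (x i))).Finite ∧
          ∃ r p : ℕ, HasIndexPeriod (x i) r p ∧ r ≡ 1 [MOD p] ∧
            T.count (x i) = r + p - 2) ∧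
        (∀ i j, i < j → x i * x j = x j ∧ x j * x i = x j) ∧
        (∀ i j, i ≠ j →
          {y ∈ Set.range (pow1 (x i)) | y * y ≠ y}
            ∩ {y ∈ Set.range (pow1 (x j)) | y * y ≠ y} = ∅) ∧
        (∀ s : S, s ∉ ⋃ i, Set.range (pow1 (x i)) → s * s = s) := by
  rw [Set.eq_empty_iff_forall_notMem]
  constructor
  · intro hfree
    replace hfree : ∀ s ∈ PiSet T, s * s ≠ s := fun s hs he => hfree s ⟨hs, he⟩
    obtain ⟨l, hnd, hmem, hchain⟩ := exists_chain_of_free hfin hfree hlen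
    obtain ⟨hcount, hcover⟩ := count_eq_and_cover_of_free hfin hfree hlen
    have hsupp : ∀ s, s ∈ T ↔ ∃ i, s = l.get i := fun s => by
      simp only [← hmem, List.mem_iff_get, eq_comm]
    refine ⟨l.length, l.get, List.nodup_iff_injective_get.1 hnd, hsupp, fun i => ?_,
      List.pairwise_iff_get.1 hchain, fun i j hij => ?_, fun s hs => ?_⟩
    · obtain ⟨r, p, h, hc⟩ := hcount _ ((hsupp _).2 ⟨i, rfl⟩)
      exact ⟨h.finite_range_pow1, r, p, h, modEq_one_of_count_eq hfree h hc, hc⟩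
    · rw [← Set.disjoint_iff_inter_eq_empty]
      rcases lt_or_gt_of_ne hij with hlt | hlt
      exacts [disjoint_nonidempotent_pow1_of_mul_eq (List.pairwise_iff_get.1 hchain _ _ hlt).1,
        (disjoint_nonidempotent_pow1_of_mul_eq (List.pairwise_iff_get.1 hchain _ _ hlt).1).symm]
    · by_contra hne
      obtain ⟨u, hu, hsu⟩ := hcover s hne
      obtain ⟨i, rfl⟩ := (hsupp u).1 hu
      exact hs (Set.mem_iUnion.2 ⟨i, hsu⟩)
  · rintro ⟨k, x, -, hsupp, hidx, hchain, -, -⟩ s ⟨hs, he⟩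
    exact mul_self_ne_of_mem_piSet (fun s hs => (hsupp s).1 hs) hchain (fun i => (hidx i).2) s hs he

/-- Main theorem (equivalent form): a sequence `T` of length `|S \ E(S)|` is
idempotent-product free iff `supp(T) = {x_1, …, x_k}` with distinct `x_i` such that
each `⟨x_i⟩` is finite with `I(x_i) ≡ 1 (mod P(x_i))` and
`v_{x_i}(T) = I(x_i) + P(x_i) - 2`, `x_i * x_j = x_j * x_i = x_j` for `i < j`,
the non-idempotent parts of the `⟨x_i⟩` are pairwise disjoint, and every element
outside `⋃ ⟨x_i⟩` is an idempotent. -/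
theorem stmt_14 {S : Type*} [Semigroup S] [Nonempty S] [DecidableEq S]
    (hfin : {x : S | x * x ≠ x}.Finite)
    (T : List S) (hlen : T.length = {x : S | x * x ≠ x}.ncard) :
    PiSet T ∩ {e : S | e * e = e} = ∅ ↔
      ∃ (k : ℕ) (x : Fin k → S), Function.Injective x ∧
        (∀ s : S, s ∈ T ↔ ∃ i, s = x i) ∧
        (∀ i, (Set.range (pow1 (x i))).Finite ∧
          ∃ r p : ℕ, HasIndexPeriod (x i) r p ∧ r ≡ 1 [MOD p] ∧
            T.count (x i) = r + p - 2) ∧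
        (∀ i j, i < j → x i * x j = x j ∧ x j * x i = x j) ∧
        (∀ i j, i ≠ j →
          {y ∈ Set.range (pow1 (x i)) | y * y ≠ y}
            ∩ {y ∈ Set.range (pow1 (x j)) | y * y ≠ y} = ∅) ∧
        (∀ s : S, s ∉ ⋃ i, Set.range (pow1 (x i)) → s * s = s) :=
  stmt_14_general hfin T hlen
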